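/- arXiv:2212.06881 — 4 statements merged into one kernel-verified Lean document; each statement's English description precedes it below -/
import Mathlib

section
/- Let T : X → X be weakly sequentially continuous and let (T_k) be a sequence of non-expansive maps on X with fixed points a_k. Suppose (a_k) is contained in a bounded set B ⊆ X and that (T_k) converges to T weakly uniformly on B, i.e. for every z ∈ X, sup_{x ∈ B} ⟨T_k(x) − T(x), z⟩ → 0. Then the limit of every weakly convergent subsequence of (a_k) is a fixed point of T. -/
open scoped RealInnerProductSpace
open Filter Topology

/-! Writing `aₖ = Tₖ aₖ = (Tₖ aₖ - T aₖ) + T aₖ`, the first summand tends weakly to `0` along the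
subsequence by the weakly uniform convergence on `B ∋ aₖ`, and the second tends weakly to `T a` by
weak sequential continuity. Hence the subsequence converges weakly both to `a` and to `T a`, and
weak limits are unique. -/

section

variable {X ι : Type*} [NormedAddCommGroup X] [InnerProductSpace ℝ X]

theorem eq_of_tendsto_inner_of_tendsto_inner {l : Filter ι} [l.NeBot] {x : ι → X} {a b : X}
    (ha : ∀ z : X, Tendsto (fun i => ⟪x i, z⟫) l (𝓝 ⟪a, z⟫))
    (hb : ∀ z : X, Tendsto (fun i => ⟪x i, z⟫) l (𝓝 ⟪b, z⟫)) : a = b :=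
  ext_inner_right ℝ fun z => tendsto_nhds_unique (ha z) (hb z)

theorem tendsto_inner_sub_of_forall_uniform {Tk : ℕ → X → X} {T : X → X} {B : Set X}
    (hunif : ∀ z : X, ∀ ε > (0 : ℝ), ∃ N : ℕ, ∀ k ≥ N, ∀ x ∈ B, |⟪Tk k x - T x, z⟫| < ε)
    {l : Filter ι} {k : ι → ℕ} (hk : Tendsto k l atTop) {y : ι → X} (hy : ∀ i, y i ∈ B)
    (z : X) : Tendsto (fun i => ⟪Tk (k i) (y i) - T (y i), z⟫) l (𝓝 0) := by
  refine Metric.tendsto_nhds.2 fun ε hε => ?_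
  obtain ⟨N, hN⟩ := hunif z ε hε
  filter_upwards [tendsto_atTop.1 hk N] with i hi
  simpa [Real.dist_eq] using hN (k i) hi (y i) (hy i)

end

theorem weak_subsequential_limits_are_fixed_points_general
    {X : Type*} [NormedAddCommGroup X] [InnerProductSpace ℝ X]
    (T : X → X)
    (hT_weak_cont : ∀ (x : ℕ → X) (p : X),
      (∀ z : X, Filter.Tendsto (fun n => ⟪x n, z⟫) Filter.atTop (nhds ⟪p, z⟫)) →
      (∀ z : X, Filter.Tendsto (fun n => ⟪T (x n), z⟫) Filter.atTop (nhds ⟪T p, z⟫)))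
    (Tk : ℕ → X → X)
    (ak : ℕ → X) (hfix : ∀ k, Tk k (ak k) = ak k)
    (B : Set X) (hak_mem : ∀ k, ak k ∈ B)
    (hweak_unif : ∀ z : X, ∀ ε > (0 : ℝ), ∃ N : ℕ, ∀ k ≥ N, ∀ x ∈ B,
      |⟪Tk k x - T x, z⟫| < ε) :
    ∀ (φ : ℕ → ℕ), StrictMono φ → ∀ a : X,
      (∀ z : X, Filter.Tendsto (fun n => ⟪ak (φ n), z⟫) Filter.atTop (nhds ⟪a, z⟫)) →
      T a = a := by
  intro φ hφ a ha
  refine eq_of_tendsto_inner_of_tendsto_inner (fun z => ?_) ha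
  have hdefect := tendsto_inner_sub_of_forall_uniform hweak_unif hφ.tendsto_atTop
    (fun n => hak_mem (φ n)) z
  have hsum := hdefect.add (hT_weak_cont _ a ha z)
  rw [zero_add] at hsum
  refine hsum.congr fun n => ?_
  rw [← inner_add_left, sub_add_cancel, hfix]

/-- If `T` is weakly sequentially continuous, `T_k` are non-expansive with
fixed points `a_k` contained in a bounded set `B`, and `T_k → T` weakly uniformly on `B`,
then the limit of every weakly convergent subsequence of `(a_k)` is a fixed point of `T`. -/
theorem weak_subsequential_limits_are_fixed_points
    {X : Type*} [NormedAddCommGroup X] [InnerProductSpace ℝ X] [CompleteSpace X]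
    (T : X → X)
    (hT_weak_cont : ∀ (x : ℕ → X) (p : X),
      (∀ z : X, Filter.Tendsto (fun n => ⟪x n, z⟫) Filter.atTop (nhds ⟪p, z⟫)) →
      (∀ z : X, Filter.Tendsto (fun n => ⟪T (x n), z⟫) Filter.atTop (nhds ⟪T p, z⟫)))
    (Tk : ℕ → X → X)
    (hTk_nonexp : ∀ k, ∀ x₁ x₂ : X, ‖Tk k x₁ - Tk k x₂‖ ≤ ‖x₁ - x₂‖)
    (ak : ℕ → X) (hfix : ∀ k, Tk k (ak k) = ak k)
    (B : Set X) (hB_bounded : Bornology.IsBounded B) (hak_mem : ∀ k, ak k ∈ B)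
    (hweak_unif : ∀ z : X, ∀ ε > (0 : ℝ), ∃ N : ℕ, ∀ k ≥ N, ∀ x ∈ B,
      |⟪Tk k x - T x, z⟫| < ε) :
    ∀ (φ : ℕ → ℕ), StrictMono φ → ∀ a : X,
      (∀ z : X, Filter.Tendsto (fun n => ⟪ak (φ n), z⟫) Filter.atTop (nhds ⟪a, z⟫)) →
      T a = a :=
  weak_subsequential_limits_are_fixed_points_general T hT_weak_cont Tk ak hfix B hak_mem hweak_unif
end

section
/- In ℓ²(ℕ), let B be the closed unit ball and C_λ = {x ∈ B : ‖x‖_∞ ≤ λ}. Then for every z ∈ ℓ²(ℕ), sup_{x ∈ C_λ} ⟨x, z⟩ → 0 as λ → 0. -/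
/-!
Split `z` into a finite head `∑ i ∈ s, zᵢ eᵢ` and a tail of norm `< ε / 2`. Against `x` with
`‖x‖ ≤ 1` and `‖x‖_∞ ≤ λ`, the head contributes at most `λ ∑ i ∈ s, |zᵢ|` and, by Cauchy–Schwarz,
the tail at most `ε / 2`; so `λ < ε / (2 (∑ i ∈ s, |zᵢ| + 1))` suffices.
-/

open scoped RealInnerProductSpace

namespace lp

variable {ι : Type*} [DecidableEq ι]

theorem exists_norm_sub_sum_single_lt {E : ι → Type*} [∀ i, NormedAddCommGroup (E i)]
    {p : ENNReal} [Fact (1 ≤ p)] (hp : p ≠ ⊤) (f : lp E p) {ε : ℝ} (hε : 0 < ε) :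
    ∃ s : Finset ι, ‖f - ∑ i ∈ s, lp.single p i (f i)‖ < ε := by
  obtain ⟨s, hs⟩ := ((lp.hasSum_single hp f).eventually (Metric.ball_mem_nhds f hε)).exists
  exact ⟨s, by rwa [dist_comm, dist_eq_norm] at hs⟩

theorem inner_sum_single_le_of_abs_le {x : lp (fun _ : ι => ℝ) 2} {lam : ℝ}
    (hx : ∀ i, |x i| ≤ lam) (s : Finset ι) (c : ι → ℝ) :
    ⟪x, ∑ i ∈ s, lp.single 2 i (c i)⟫ ≤ lam * ∑ i ∈ s, |c i| := by
  rw [inner_sum, Finset.mul_sum]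
  refine Finset.sum_le_sum fun i _ => ?_
  rw [inner_single_right, Real.inner_apply]
  calc x i * c i ≤ |x i| * |c i| := by rw [← abs_mul]; exact le_abs_self _
    _ ≤ lam * |c i| := by gcongr; exact hx i

theorem inner_le_of_abs_le {x : lp (fun _ : ι => ℝ) 2} {lam : ℝ}
    (hx : ∀ i, |x i| ≤ lam) (z : lp (fun _ : ι => ℝ) 2) (s : Finset ι) :
    ⟪x, z⟫ ≤ lam * ∑ i ∈ s, |z i| + ‖x‖ * ‖z - ∑ i ∈ s, lp.single 2 i (z i)‖ := by
  calc ⟪x, z⟫ = ⟪x, ∑ i ∈ s, lp.single 2 i (z i)⟫ + ⟪x, z - ∑ i ∈ s, lp.single 2 i (z i)⟫ := by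
        rw [← inner_add_right, add_sub_cancel]
    _ ≤ _ := add_le_add (inner_sum_single_le_of_abs_le hx s _) (real_inner_le_norm _ _)

end lp

/-- In `ℓ²(ℕ)`, with `C_λ = {x : ‖x‖ ≤ 1, ‖x‖_∞ ≤ λ}`, for every `z` the
supremum `sup_{x ∈ C_λ} ⟪x, z⟫` tends to `0` as `λ → 0`. -/
theorem sup_over_small_ball_tendsto_zero
    (z : lp (fun _ : ℕ => ℝ) 2) :
    ∀ ε > (0 : ℝ), ∃ δ > (0 : ℝ), ∀ lam : ℝ, 0 < lam → lam < δ →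
      ∀ x : lp (fun _ : ℕ => ℝ) 2, ‖x‖ ≤ 1 → (∀ i, |x i| ≤ lam) → ⟪x, z⟫ < ε := by
  intro ε hε
  obtain ⟨s, hs⟩ := lp.exists_norm_sub_sum_single_lt (by norm_num) z (half_pos hε)
  set S := ∑ i ∈ s, |z i|
  have hS : 0 ≤ S := Finset.sum_nonneg fun i _ => abs_nonneg _
  refine ⟨ε / (2 * (S + 1)), by positivity, fun lam _ hlam x hx hxlam => ?_⟩
  have head : lam * S < ε / 2 := by
    calc lam * S ≤ lam * (S + 1) := by nlinarith
      _ < (ε / (2 * (S + 1))) * (S + 1) := by gcongr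
      _ = ε / 2 := by field_simp
  have tail : ‖x‖ * ‖z - ∑ i ∈ s, lp.single 2 i (z i)‖ ≤ ε / 2 := by
    nlinarith [norm_nonneg x, norm_nonneg (z - ∑ i ∈ s, lp.single 2 i (z i))]
  linarith [lp.inner_le_of_abs_le hxlam z s]
end

section
/- Let A : X → Y be bounded linear, let (x_k) be a sequence in a bounded set B ⊆ X converging weakly to x*, and let H : X → X be weakly sequentially continuous. Suppose (λ_k) are positive reals and Ψ_k : X → X are maps such that (i) Ψ_k(x_k) − x_k ∈ range(A*) ⊆ ker(A)^⊥ for all k, and (ii) for every z ∈ X, sup_{x ∈ B} |⟨(Ψ_k(x) − x)/λ_k − H(x), z⟩| → 0. Then H(x*) ∈ ker(A)^⊥. -/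
open scoped RealInnerProductSpace
open Filter Topology

theorem ContinuousLinearMap.range_adjoint_le_orthogonal_ker {𝕜 E F : Type*} [RCLike 𝕜]
    [NormedAddCommGroup E] [InnerProductSpace 𝕜 E] [CompleteSpace E]
    [NormedAddCommGroup F] [InnerProductSpace 𝕜 F] [CompleteSpace F] (T : E →L[𝕜] F) :
    (adjoint T).range ≤ T.kerᗮ :=
  T.orthogonal_ker ▸ Submodule.le_topologicalClosure _

theorem tendsto_apply_of_uniformlyOn_abs_lt {α : Type*} {B : Set α} {g : ℕ → α → ℝ}
    (hg : ∀ ε > (0 : ℝ), ∃ N : ℕ, ∀ k ≥ N, ∀ x ∈ B, |g k x| < ε)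
    {u : ℕ → α} (hu : ∀ k, u k ∈ B) :
    Tendsto (fun k => g k (u k)) atTop (𝓝 0) := by
  rw [Metric.tendsto_atTop]
  intro ε hε
  obtain ⟨N, hN⟩ := hg ε hε
  exact ⟨N, fun k hk => by simpa [Real.dist_eq] using hN k hk (u k) (hu k)⟩

theorem limit_in_ker_orthogonal_general
    {X Y : Type*} [NormedAddCommGroup X] [InnerProductSpace ℝ X] [CompleteSpace X]
    [NormedAddCommGroup Y] [InnerProductSpace ℝ Y] [CompleteSpace Y]
    (A : X →L[ℝ] Y)
    (B : Set X)
    (xk : ℕ → X) (hxk_mem : ∀ k, xk k ∈ B)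
    (xstar : X)
    (hweak : ∀ z : X, Filter.Tendsto (fun k => ⟪xk k, z⟫) Filter.atTop (nhds ⟪xstar, z⟫))
    (H : X → X)
    (hH_weak_cont : ∀ (u : ℕ → X) (p : X),
      (∀ z : X, Filter.Tendsto (fun n => ⟪u n, z⟫) Filter.atTop (nhds ⟪p, z⟫)) →
      (∀ z : X, Filter.Tendsto (fun n => ⟪H (u n), z⟫) Filter.atTop (nhds ⟪H p, z⟫)))
    (lamk : ℕ → ℝ)
    (Ψ : ℕ → X → X)
    (hrange : ∀ k, Ψ k (xk k) - xk k ∈ Set.range (A.adjoint))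
    (hunif : ∀ z : X, ∀ ε > (0 : ℝ), ∃ N : ℕ, ∀ k ≥ N, ∀ x ∈ B,
      |⟪(lamk k)⁻¹ • (Ψ k x - x) - H x, z⟫| < ε) :
    H xstar ∈ (LinearMap.ker (A : X →ₗ[ℝ] Y))ᗮ := by
  rw [Submodule.mem_orthogonal']
  intro v hv
  have hperp (k : ℕ) : ⟪Ψ k (xk k) - xk k, v⟫ = 0 :=
    Submodule.inner_left_of_mem_orthogonal hv (A.range_adjoint_le_orthogonal_ker (hrange k))
  -- pairing with `v` kills the residual term, leaving minus the uniformly small error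
  have hHxk : Tendsto (fun k => ⟪H (xk k), v⟫) atTop (𝓝 0) := by
    simpa [inner_sub_left, inner_smul_left, hperp] using
      (tendsto_apply_of_uniformlyOn_abs_lt (hunif v) hxk_mem).neg
  exact tendsto_nhds_unique (hH_weak_cont xk xstar hweak v) hHxk

/-- If `x_k ⇀ x*` in a bounded set `B`, `H` is weakly sequentially
continuous, `Ψ_k(x_k) - x_k ∈ range(A*) ⊆ ker(A)ᗮ`, and `(Ψ_k - Id)/λ_k → H` weakly
uniformly on `B`, then `H(x*) ∈ ker(A)ᗮ`. -/
theorem limit_in_ker_orthogonal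
    {X Y : Type*} [NormedAddCommGroup X] [InnerProductSpace ℝ X] [CompleteSpace X]
    [NormedAddCommGroup Y] [InnerProductSpace ℝ Y] [CompleteSpace Y]
    (A : X →L[ℝ] Y)
    (B : Set X) (hB : Bornology.IsBounded B)
    (xk : ℕ → X) (hxk_mem : ∀ k, xk k ∈ B)
    (xstar : X)
    (hweak : ∀ z : X, Filter.Tendsto (fun k => ⟪xk k, z⟫) Filter.atTop (nhds ⟪xstar, z⟫))
    (H : X → X)
    (hH_weak_cont : ∀ (u : ℕ → X) (p : X),
      (∀ z : X, Filter.Tendsto (fun n => ⟪u n, z⟫) Filter.atTop (nhds ⟪p, z⟫)) →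
      (∀ z : X, Filter.Tendsto (fun n => ⟪H (u n), z⟫) Filter.atTop (nhds ⟪H p, z⟫)))
    (lamk : ℕ → ℝ) (hlamk : ∀ k, 0 < lamk k)
    (Ψ : ℕ → X → X)
    (hrange : ∀ k, Ψ k (xk k) - xk k ∈ Set.range (A.adjoint))
    (hunif : ∀ z : X, ∀ ε > (0 : ℝ), ∃ N : ℕ, ∀ k ≥ N, ∀ x ∈ B,
      |⟪(lamk k)⁻¹ • (Ψ k x - x) - H x, z⟫| < ε) :
    H xstar ∈ (LinearMap.ker (A : X →ₗ[ℝ] Y))ᗮ :=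
  limit_in_ker_orthogonal_general A B xk hxk_mem xstar hweak H hH_weak_cont lamk Ψ hrange hunif
end

section
/- Let D : X × Y → [0,∞) satisfy: D convex and Fréchet differentiable in x, ∇ₓD (1/β)-Lipschitz in x, and (∇ₓD(x,·))_{x∈X} equicontinuous in y (i.e. y_k → y implies sup_x ‖∇ₓD(x,y_k) − ∇ₓD(x,y)‖ → 0). Let Φ : X → X be a contraction and s ∈ (0, 2β). Then the map y ↦ fix(Φ ∘ (Id − s∇ₓD(·, y))), assigning to y the unique fixed point of the PnP operator, is (strongly) continuous from Y to X. -/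
/-!
The gradient `∇ₓD(·, y)` of a convex function with `(1/β)`-Lipschitz gradient is
`β`-cocoercive (Baillon–Haddad), which makes the gradient step `Id - s ∇ₓD(·, y)`
nonexpansive for `0 < s ≤ 2β`, so `T_y = Φ ∘ (Id - s ∇ₓD(·, y))` is a `c`-contraction for
every `y`. For a contraction, `dist u (fix T_y) ≤ dist u (T_y u) / (1 - c)`; taking
`u = fix T_{y₀} = T_{y₀} u`, the right side tends to `0` as `y → y₀` because `y ↦ T_y u`
is continuous.
-/

open RealInnerProductSpace NNReal Function Filter Topology

section Gradient

variable {X : Type*} [NormedAddCommGroup X] [InnerProductSpace ℝ X] [CompleteSpace X]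
  {f : X → ℝ}

theorem HasGradientAt.hasDerivAt_comp_add_smul {g x v : X} {t : ℝ}
    (hg : HasGradientAt f g (x + t • v)) :
    HasDerivAt (fun t : ℝ => f (x + t • v)) ⟪g, v⟫ t := by
  have hline : HasDerivAt (fun t : ℝ => x + t • v) v t := by
    simpa using ((hasDerivAt_id t).smul_const v).const_add x
  simpa [Function.comp_def] using hg.hasFDerivAt.comp_hasDerivAt t hline

theorem ConvexOn.add_inner_le_of_hasGradientAt (hf : ConvexOn ℝ Set.univ f) {g x : X}
    (hg : HasGradientAt f g x) (z : X) :
    f x + ⟪g, z - x⟫ ≤ f z := by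
  have hlineMap : (AffineMap.lineMap x z : ℝ → X) = fun t => x + t • (z - x) := by
    ext t; rw [AffineMap.lineMap_apply_module', add_comm]
  have hline : ConvexOn ℝ Set.univ (fun t : ℝ => f (x + t • (z - x))) := by
    simpa [hlineMap, Function.comp_def] using hf.comp_affineMap (AffineMap.lineMap x z)
  have hderiv : HasDerivAt (fun t : ℝ => f (x + t • (z - x))) ⟪g, z - x⟫ 0 :=
    HasGradientAt.hasDerivAt_comp_add_smul (by simpa using hg)
  have := hline.le_slope_of_hasDerivAt (Set.mem_univ 0) (Set.mem_univ 1) one_pos hderiv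
  simp only [slope_def_field, one_smul, add_sub_cancel, zero_smul, add_zero, sub_zero, div_one]
    at this
  linarith

section LipschitzGradient

variable {g : X → X} {L : ℝ≥0}

theorem le_add_inner_add_of_lipschitzWith_gradient (hg : ∀ p, HasGradientAt f (g p) p)
    (hlip : LipschitzWith L g) (x z : X) :
    f z ≤ f x + ⟪g x, z - x⟫ + L / 2 * ‖z - x‖ ^ 2 := by
  set v := z - x
  set φ : ℝ → ℝ := fun t => f (x + t • v) - t * ⟪g x, v⟫ - L * t ^ 2 / 2 * ‖v‖ ^ 2
  have hφ : ∀ t, HasDerivAt φ (⟪g (x + t • v), v⟫ - ⟪g x, v⟫ - L * t * ‖v‖ ^ 2) t := by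
    intro t
    have hquad := ((hasDerivAt_pow 2 t).const_mul (L : ℝ)).div_const 2 |>.mul_const (‖v‖ ^ 2)
    have hf := (hg (x + t • v)).hasDerivAt_comp_add_smul (x := x) (v := v)
    exact (hf.sub ((hasDerivAt_id t).mul_const ⟪g x, v⟫)).sub hquad |>.congr_deriv
      (by simp only [Nat.cast_ofNat]; ring)
  have hanti : AntitoneOn φ (Set.Icc 0 1) := by
    refine antitoneOn_of_deriv_nonpos (convex_Icc 0 1)
      (fun t _ => (hφ t).continuousAt.continuousWithinAt)
      (fun t _ => (hφ t).differentiableAt.differentiableWithinAt) fun t ht => ?_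
    rw [interior_Icc] at ht
    rw [(hφ t).deriv, sub_sub, sub_nonpos, ← sub_le_iff_le_add', ← inner_sub_left]
    calc ⟪g (x + t • v) - g x, v⟫ ≤ ‖g (x + t • v) - g x‖ * ‖v‖ := real_inner_le_norm _ _
      _ ≤ L * ‖x + t • v - x‖ * ‖v‖ := by gcongr; exact hlip.norm_sub_le _ _
      _ = L * t * ‖v‖ ^ 2 := by
        rw [add_sub_cancel_left, norm_smul, Real.norm_of_nonneg ht.1.le]; ring
  have := hanti (by simp) (by simp) zero_le_one
  simp only [one_smul, add_sub_cancel, one_mul, one_pow, mul_one, zero_smul, add_zero, zero_mul,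
    sub_zero, ne_eq, OfNat.ofNat_ne_zero, not_false_eq_true, zero_pow, mul_zero, zero_div,
    tsub_le_iff_right, φ, v] at this
  linarith

/-- Bound `f` at the gradient step `z - L⁻¹ • (g z - g x)` from below by convexity at `x` and
from above by the descent lemma at `z`. -/
theorem ConvexOn.sq_norm_gradient_sub_le (hf : ConvexOn ℝ Set.univ f)
    (hg : ∀ p, HasGradientAt f (g p) p) (hlip : LipschitzWith L g) (hL : 0 < L) (x z : X) :
    ‖g z - g x‖ ^ 2 ≤ 2 * L * (f z - f x - ⟪g x, z - x⟫) := by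
  set d := g z - g x
  set w := z - (L : ℝ)⁻¹ • d
  have hconv := hf.add_inner_le_of_hasGradientAt (hg x) w
  have hdescent := le_add_inner_add_of_lipschitzWith_gradient hg hlip z w
  have hwx : w - x = (z - x) - (L : ℝ)⁻¹ • d := by simp only [w]; abel
  have hwz : w - z = -((L : ℝ)⁻¹ • d) := by simp only [w]; abel
  rw [hwx, inner_sub_right, real_inner_smul_right] at hconv
  rw [hwz, inner_neg_right, real_inner_smul_right, norm_neg, norm_smul, Real.norm_eq_abs,
    abs_inv, NNReal.abs_eq] at hdescent
  have hdd : ⟪g z, d⟫ - ⟪g x, d⟫ = ‖d‖ ^ 2 := by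
    rw [← inner_sub_left, real_inner_self_eq_norm_sq]
  have hL' : (0 : ℝ) < L := hL
  field_simp at hconv hdescent
  linarith

/-- Baillon–Haddad. -/
theorem ConvexOn.sq_norm_gradient_sub_le_inner (hf : ConvexOn ℝ Set.univ f)
    (hg : ∀ p, HasGradientAt f (g p) p) (hlip : LipschitzWith L g) (hL : 0 < L) (x z : X) :
    ‖g z - g x‖ ^ 2 ≤ L * ⟪g z - g x, z - x⟫ := by
  have hxz := hf.sq_norm_gradient_sub_le hg hlip hL x z
  have hzx := hf.sq_norm_gradient_sub_le hg hlip hL z x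
  rw [norm_sub_rev] at hzx
  have hinner : ⟪g z - g x, z - x⟫ = -⟪g z, x - z⟫ - ⟪g x, z - x⟫ := by
    rw [inner_sub_left, ← neg_sub x z, inner_neg_right]
  rw [hinner]
  linarith

theorem ConvexOn.lipschitzWith_one_sub_smul_gradient (hf : ConvexOn ℝ Set.univ f)
    (hg : ∀ p, HasGradientAt f (g p) p) (hlip : LipschitzWith L g) (hL : 0 < L) {s : ℝ}
    (hs : 0 ≤ s) (hsL : s * L ≤ 2) :
    LipschitzWith 1 (fun x => x - s • g x) := by
  refine LipschitzWith.mk_one fun a b => ?_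
  rw [dist_eq_norm, dist_eq_norm]
  have hcoco := hf.sq_norm_gradient_sub_le_inner hg hlip hL b a
  have hmono : 0 ≤ ⟪g a - g b, a - b⟫ :=
    (mul_nonneg_iff_of_pos_left (show (0 : ℝ) < L from hL)).mp ((sq_nonneg _).trans hcoco)
  have hsplit : a - s • g a - (b - s • g b) = (a - b) - s • (g a - g b) := by
    rw [smul_sub]; abel
  have hsq : ‖(a - b) - s • (g a - g b)‖ ^ 2 ≤ ‖a - b‖ ^ 2 := by
    rw [norm_sub_sq_real, real_inner_smul_right, norm_smul, Real.norm_of_nonneg hs,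
      real_inner_comm, mul_pow]
    linarith [mul_le_mul_of_nonneg_left hcoco (sq_nonneg s),
      mul_nonneg (mul_nonneg hs (sub_nonneg.2 hsL)) hmono]
  rw [hsplit]
  exact pow_le_pow_iff_left₀ (norm_nonneg _) (norm_nonneg _) two_ne_zero |>.mp hsq

end LipschitzGradient

end Gradient

theorem continuous_of_contractingWith_of_isFixedPt {X Y : Type*} [MetricSpace X]
    [TopologicalSpace Y] {K : ℝ≥0} {T : Y → X → X} (hT : ∀ y, ContractingWith K (T y))
    (hTcont : ∀ x, Continuous fun y => T y x) {u : Y → X} (hu : ∀ y, IsFixedPt (T y) (u y)) :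
    Continuous u := by
  refine continuous_iff_continuousAt.mpr fun y₀ => ?_
  have hlim : Tendsto (fun y => dist (u y₀) (T y (u y₀)) / (1 - K)) (𝓝 y₀) (𝓝 0) := by
    have := ((hTcont (u y₀)).tendsto y₀).dist (tendsto_const_nhds (x := u y₀))
    rw [hu y₀, dist_self] at this
    simpa [dist_comm] using this.div_const _
  rw [ContinuousAt, tendsto_iff_dist_tendsto_zero]
  refine squeeze_zero (fun _ => dist_nonneg) (fun y => ?_) hlim
  rw [dist_comm]
  exact (hT y).dist_le_of_fixedPoint (u y₀) (hu y)

theorem pnp_fixed_point_map_continuous_general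
    {X Y : Type*} [NormedAddCommGroup X] [InnerProductSpace ℝ X] [CompleteSpace X]
    [NormedAddCommGroup Y]
    (D : X → Y → ℝ)
    (G : X → Y → X)
    (hconv : ∀ y, ConvexOn ℝ Set.univ (fun x => D x y))
    (hgrad : ∀ x y, HasGradientAt (fun x => D x y) (G x y) x)
    (β : ℝ)
    (hlip : ∀ y x₁ x₂, ‖G x₁ y - G x₂ y‖ ≤ (1 / β) * ‖x₁ - x₂‖)
    (hequi : ∀ y : Y, ∀ ε > (0 : ℝ), ∃ δ > (0 : ℝ), ∀ y' : Y, ‖y' - y‖ < δ →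
      ∀ x : X, ‖G x y' - G x y‖ < ε)
    (Φ : X → X) (c : ℝ) (hc_nonneg : 0 ≤ c) (hc_lt_one : c < 1)
    (hΦ_lip : ∀ x₁ x₂ : X, ‖Φ x₁ - Φ x₂‖ ≤ c * ‖x₁ - x₂‖)
    (s : ℝ) (hs : s ∈ Set.Ioo (0 : ℝ) (2 * β))
    (fixmap : Y → X)
    (hfix : ∀ y : Y, Φ (fixmap y - s • G (fixmap y) y) = fixmap y) :
    Continuous fixmap := by
  have hβ : 0 < β := by linarith [hs.1, hs.2]
  let L : ℝ≥0 := ⟨1 / β, by positivity⟩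
  have hL_coe : (L : ℝ) = 1 / β := rfl
  have hL : 0 < L := by rw [← NNReal.coe_pos, hL_coe]; positivity
  have hsL : s * L ≤ 2 := by rw [hL_coe, mul_one_div, div_le_iff₀ hβ]; linarith [hs.2]
  have hGlip (y : Y) : LipschitzWith L (G · y) :=
    .of_dist_le_mul fun a b => by rw [dist_eq_norm, dist_eq_norm]; exact hlip y a b
  let K : ℝ≥0 := ⟨c, hc_nonneg⟩
  have hΦ : LipschitzWith K Φ :=
    .of_dist_le_mul fun a b => by rw [dist_eq_norm, dist_eq_norm]; exact hΦ_lip a b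
  have hT (y : Y) : ContractingWith K (Φ ∘ fun x => x - s • G x y) := by
    have hstep := (hconv y).lipschitzWith_one_sub_smul_gradient (hgrad · y) (hGlip y) hL
      hs.1.le hsL
    exact ⟨hc_lt_one, by simpa only [mul_one] using hΦ.comp hstep⟩
  have hGcont (x : X) : Continuous (G x ·) := Metric.continuous_iff.mpr fun y ε hε => by
    simpa [dist_eq_norm] using (hequi y ε hε).imp fun δ ⟨hδ, h⟩ => ⟨hδ, fun y' hy' => h y' hy' x⟩
  exact continuous_of_contractingWith_of_isFixedPt hT
    (fun x => hΦ.continuous.comp (continuous_const.sub (continuous_const.smul (hGcont x)))) hfix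

/-- Stability of PnP. Under convexity, `(1/β)`-Lipschitz continuity of the
gradient `G = ∇ₓD`, equicontinuity of `(G x ·)_x` in the data, and contractivity of `Φ`,
the map sending data `y` to the unique fixed point of `Φ ∘ (Id - s • G (·) y)` is
(strongly) continuous. -/
theorem pnp_fixed_point_map_continuous
    {X Y : Type*} [NormedAddCommGroup X] [InnerProductSpace ℝ X] [CompleteSpace X]
    [NormedAddCommGroup Y] [InnerProductSpace ℝ Y]
    (D : X → Y → ℝ) (hDnonneg : ∀ x y, 0 ≤ D x y)
    (G : X → Y → X)
    (hconv : ∀ y, ConvexOn ℝ Set.univ (fun x => D x y))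
    (hgrad : ∀ x y, HasGradientAt (fun x => D x y) (G x y) x)
    (β : ℝ) (hβ : 0 < β)
    (hlip : ∀ y x₁ x₂, ‖G x₁ y - G x₂ y‖ ≤ (1 / β) * ‖x₁ - x₂‖)
    (hequi : ∀ y : Y, ∀ ε > (0 : ℝ), ∃ δ > (0 : ℝ), ∀ y' : Y, ‖y' - y‖ < δ →
      ∀ x : X, ‖G x y' - G x y‖ < ε)
    (Φ : X → X) (c : ℝ) (hc_nonneg : 0 ≤ c) (hc_lt_one : c < 1)
    (hΦ_lip : ∀ x₁ x₂ : X, ‖Φ x₁ - Φ x₂‖ ≤ c * ‖x₁ - x₂‖)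
    (s : ℝ) (hs : s ∈ Set.Ioo (0 : ℝ) (2 * β))
    (fixmap : Y → X)
    (hfix : ∀ y : Y, Φ (fixmap y - s • G (fixmap y) y) = fixmap y) :
    Continuous fixmap :=
  pnp_fixed_point_map_continuous_general D G hconv hgrad β hlip hequi Φ c hc_nonneg hc_lt_one hΦ_lip
    s hs fixmap hfix
end
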